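/- Let A ≤ B be irreducible nonnegative matrices on countable S, A ≠ B, with ρ(B) < ∞. If ρ(B) = ρ(A), then A is R-transient, i.e., Σ_{n≥1} ρ(A)^{-n} A^n(x,x) < ∞ for all x ∈ S. -/

import Mathlib

/-!
Write `u n = Aⁿ(x,x)` and let `f n` be the weight of the loops of length `n + 1` at `x` that do
not visit `x` in between. Cutting a path at its last visit to `x` makes `u` the renewal sequence
of `f`, so the generating functions `U(t) = ∑ tⁿ u n` and `F(t) = ∑ tⁿ⁺¹ f n` satisfy
`U = 1 + U F`: hence `U(t) < ∞` forces `F(t) < 1`, and `U(t) ≤ (1 - F(t))⁻¹` in general.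

For `B`, the root test makes `U_B(t)` finite for `t < 1/ρ`, so `F_B(1/ρ) ≤ 1` by left continuity.
By irreducibility of `B`, an entry where `A < B` lies on a first-return loop at `x`, so
`F_A(1/ρ) < F_B(1/ρ) ≤ 1`, and `U_A(1/ρ) < ∞`.
-/

open scoped ENNReal
open Filter

variable {S : Type*}

/-- Matrix powers of a nonnegative (possibly infinite-sum) matrix on a countable set. -/
noncomputable def matPow [DecidableEq S] (A : S → S → ℝ≥0∞) : ℕ → S → S → ℝ≥0∞
  | 0 => fun x y => if x = y then 1 else 0
  | n + 1 => fun x y => ∑' z, matPow A n x z * A z y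

open Topology

-- Mathlib's Cauchy product formula assumes a continuous multiplication, which `ℝ≥0∞` lacks.
theorem ENNReal.tsum_mul_tsum_eq_tsum_sum_range (a b : ℕ → ℝ≥0∞) :
    (∑' n, a n) * ∑' n, b n = ∑' n, ∑ k ∈ Finset.range (n + 1), a k * b (n - k) :=
  calc (∑' n, a n) * ∑' n, b n = ∑' p : ℕ × ℕ, a p.1 * b p.2 := by
        rw [ENNReal.tsum_prod (f := fun k l => a k * b l), ← ENNReal.tsum_mul_right]
        simp_rw [ENNReal.tsum_mul_left]
    _ = ∑' n, ∑' p : Finset.HasAntidiagonal.antidiagonal n, a p.1.1 * b p.1.2 := by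
        rw [← (Finset.HasAntidiagonal.sigmaAntidiagonalEquivProd (A := ℕ)).tsum_eq,
          ENNReal.tsum_sigma']
        rfl
    _ = ∑' n, ∑ k ∈ Finset.range (n + 1), a k * b (n - k) := by
        refine tsum_congr fun n => ?_
        rw [← Finset.Nat.sum_antidiagonal_eq_sum_range_succ fun k l => a k * b l,
          Finset.tsum_subtype (Finset.HasAntidiagonal.antidiagonal n) fun p => a p.1 * b p.2]

lemma mul_lt_mul_of_lt_of_le_of_mul_ne_top {a b c d : ℝ≥0∞} (hac : a < c) (hbd : b ≤ d)
    (hd : d ≠ 0) (hcd : c * d ≠ ⊤) : a * b < c * d :=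
  calc a * b ≤ a * d := mul_le_mul_right hbd a
    _ < c * d :=
      ENNReal.mul_lt_mul_left hd (ENNReal.lt_top_of_mul_ne_top_right hcd hac.ne_bot).ne hac

lemma tsum_mul_lt_tsum_mul_of_lt_left {ι : Type*} {f f' g g' : ι → ℝ≥0∞} (hf : f ≤ f')
    (hg : g ≤ g') (hfin : ∑' i, f' i * g' i ≠ ⊤) {i : ι} (hfi : f i < f' i) (hgi : g' i ≠ 0) :
    ∑' i, f i * g i < ∑' i, f' i * g' i := by
  have hle : ∀ j, f j * g j ≤ f' j * g' j := fun j => mul_le_mul' (hf j) (hg j)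
  exact ENNReal.tsum_lt_tsum (ne_top_of_le_ne_top hfin (ENNReal.tsum_le_tsum hle)) hle
    (mul_lt_mul_of_lt_of_le_of_mul_ne_top hfi (hg i) hgi (ENNReal.ne_top_of_tsum_ne_top hfin i))

lemma tsum_mul_lt_tsum_mul_of_lt_right {ι : Type*} {f f' g g' : ι → ℝ≥0∞} (hf : f ≤ f')
    (hg : g ≤ g') (hfin : ∑' i, f' i * g' i ≠ ⊤) {i : ι} (hfi : f' i ≠ 0) (hgi : g i < g' i) :
    ∑' i, f i * g i < ∑' i, f' i * g' i := by
  simp_rw [mul_comm (f _), mul_comm (f' _)] at hfin ⊢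
  exact tsum_mul_lt_tsum_mul_of_lt_left hg hf hfin hgi hfi

section PowerSeries

variable {f : ℕ → ℝ≥0∞}

lemma ne_top_of_tsum_pow_succ_mul_ne_top {t : ℝ≥0∞} (ht : t ≠ 0)
    (h : ∑' n, t ^ (n + 1) * f n ≠ ⊤) (n : ℕ) : f n ≠ ⊤ :=
  (ENNReal.lt_top_of_mul_ne_top_right (ENNReal.ne_top_of_tsum_ne_top h n) (pow_ne_zero _ ht)).ne

lemma tsum_pow_succ_mul_le_of_forall_lt {r c : ℝ≥0∞}
    (h : ∀ t < r, ∑' n, t ^ (n + 1) * f n ≤ c) : ∑' n, r ^ (n + 1) * f n ≤ c := by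
  rcases eq_or_ne r 0 with rfl | hr
  · simp
  rcases eq_or_ne c ⊤ with rfl | hc
  · exact le_top
  obtain ⟨t₀, ht₀, ht₀r⟩ := exists_between (pos_iff_ne_zero.2 hr)
  have hf : ∀ n, f n ≠ ⊤ :=
    ne_top_of_tsum_pow_succ_mul_ne_top ht₀.ne' (ne_top_of_le_ne_top hc (h t₀ ht₀r))
  have hlsc : LowerSemicontinuous fun t => ∑' n, t ^ (n + 1) * f n :=
    lowerSemicontinuous_tsum fun n => Continuous.lowerSemicontinuous <|
      (ENNReal.continuous_mul_const (hf n)).comp (ENNReal.continuous_pow (n + 1))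
  by_contra! hlt
  have : (𝓝[<] r).NeBot := nhdsLT_neBot_of_exists_lt ⟨0, pos_iff_ne_zero.2 hr⟩
  obtain ⟨t, hct, htr⟩ := (((hlsc r c hlt).filter_mono nhdsWithin_le_nhds).and
    (self_mem_nhdsWithin (s := Set.Iio r))).exists
  exact (h t htr).not_gt hct

variable {u : ℕ → ℝ≥0∞}

lemma eventually_le_pow_of_tendsto_rpow_inv {ρ c : ℝ≥0∞}
    (h : Tendsto (fun n : ℕ => u n ^ ((n : ℝ)⁻¹)) (atTop ⊓ 𝓟 {n | 0 < u n}) (𝓝 ρ))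
    (hc : ρ < c) : ∀ᶠ n in atTop, u n ≤ c ^ n := by
  have hlt := h.eventually_lt_const hc
  rw [eventually_inf_principal] at hlt
  filter_upwards [hlt, eventually_ne_atTop 0] with n hn hn0
  rcases eq_or_ne (u n) 0 with h0 | h0
  · simp [h0]
  · calc u n = (u n ^ ((n : ℝ)⁻¹)) ^ n := (ENNReal.rpow_inv_natCast_pow hn0 _).symm
      _ ≤ c ^ n := pow_le_pow_left' (hn (pos_iff_ne_zero.2 h0)).le n

lemma tsum_pow_mul_ne_top_of_tendsto_rpow_inv {ρ t : ℝ≥0∞}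
    (h : Tendsto (fun n : ℕ => u n ^ ((n : ℝ)⁻¹)) (atTop ⊓ 𝓟 {n | 0 < u n}) (𝓝 ρ))
    (hu : ∀ n, u n ≠ ⊤) (ht : t < ρ⁻¹) : ∑' n, t ^ n * u n ≠ ⊤ := by
  obtain ⟨c, hρc, hct⟩ := exists_between (ENNReal.lt_inv_iff_lt_inv.1 ht)
  have htc : t * c < 1 := ENNReal.mul_lt_of_lt_div' (by rwa [one_div])
  obtain ⟨N, hN⟩ := eventually_atTop.1 (eventually_le_pow_of_tendsto_rpow_inv h hρc)
  have htail : ∑' n, t ^ (n + N) * u (n + N) ≤ ∑' n, (t * c) ^ n :=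
    calc ∑' n, t ^ (n + N) * u (n + N) ≤ ∑' n, (t * c) ^ (n + N) :=
          ENNReal.tsum_le_tsum fun n => by
            rw [mul_pow]
            exact mul_le_mul_right (hN _ (Nat.le_add_left N n)) _
      _ ≤ ∑' n, (t * c) ^ n := ENNReal.tsum_comp_le_tsum_of_injective (add_left_injective N) _
  rw [← ENNReal.summable.sum_add_tsum_nat_add' (k := N)]
  refine ENNReal.add_ne_top.2 ⟨ENNReal.sum_ne_top.2 fun n _ =>
    ENNReal.mul_ne_top (ENNReal.pow_ne_top ht.ne_top) (hu n), ne_top_of_le_ne_top ?_ htail⟩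
  rw [ENNReal.tsum_geometric]
  exact ENNReal.inv_ne_top.2 (tsub_pos_of_lt htc).ne'

lemma ne_top_of_mul_le_add_of_eventually_ne_top (hmul : ∀ m n, u m * u n ≤ u (m + n))
    (hev : ∀ᶠ n in atTop, u n ≠ ⊤) {n : ℕ} (hn : n ≠ 0) : u n ≠ ⊤ := by
  intro htop
  have hmultiple : ∀ k, u (n * (k + 1)) = ⊤ := by
    intro k
    induction k with
    | zero => simpa using htop
    | succ k ih =>
      have := hmul (n * (k + 1)) n
      rw [ih, htop, ENNReal.top_mul ENNReal.top_ne_zero, ← mul_add_one] at this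
      exact top_le_iff.1 this
  obtain ⟨N, hN⟩ := eventually_atTop.1 hev
  exact hN _ (N.le_succ.trans (Nat.le_mul_of_pos_left _ (Nat.pos_of_ne_zero hn))) (hmultiple N)

end PowerSeries

/-- `f n` is the weight of a first renewal at time `n + 1`. -/
structure IsRenewalSeq (u f : ℕ → ℝ≥0∞) : Prop where
  zero : u 0 = 1
  succ : ∀ n, u (n + 1) = ∑ k ∈ Finset.range (n + 1), u k * f (n - k)

namespace IsRenewalSeq

variable {u f : ℕ → ℝ≥0∞}

lemma pow_succ_mul_eq_sum (h : IsRenewalSeq u f) (t : ℝ≥0∞) (n : ℕ) :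
    t ^ (n + 1) * u (n + 1) =
      ∑ k ∈ Finset.range (n + 1), t ^ k * u k * (t ^ (n - k + 1) * f (n - k)) := by
  rw [h.succ, Finset.mul_sum]
  refine Finset.sum_congr rfl fun k hk => ?_
  obtain ⟨j, rfl⟩ := Nat.exists_eq_add_of_le (Finset.mem_range_succ_iff.1 hk)
  rw [Nat.add_sub_cancel_left]
  ring

lemma tsum_pow_mul_eq (h : IsRenewalSeq u f) (t : ℝ≥0∞) :
    ∑' n, t ^ n * u n = 1 + (∑' n, t ^ n * u n) * ∑' n, t ^ (n + 1) * f n := by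
  rw [ENNReal.tsum_mul_tsum_eq_tsum_sum_range, tsum_eq_zero_add' ENNReal.summable, pow_zero,
    h.zero, one_mul]
  simp_rw [h.pow_succ_mul_eq_sum]

lemma tsum_pow_succ_mul_lt_one (h : IsRenewalSeq u f) {t : ℝ≥0∞}
    (hu : ∑' n, t ^ n * u n ≠ ⊤) : ∑' n, t ^ (n + 1) * f n < 1 := by
  set U := ∑' n, t ^ n * u n
  by_contra! hF
  have hle : U + 1 ≤ U :=
    calc U + 1 = 1 + U * 1 := by rw [add_comm, mul_one]
      _ ≤ 1 + U * ∑' n, t ^ (n + 1) * f n := by gcongr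
      _ = U := (h.tsum_pow_mul_eq t).symm
  exact (ENNReal.lt_add_right hu one_ne_zero).not_ge hle

lemma sum_range_pow_mul_le_geom (h : IsRenewalSeq u f) (t : ℝ≥0∞) (N : ℕ) :
    ∑ n ∈ Finset.range N, t ^ n * u n ≤
      ∑ j ∈ Finset.range N, (∑' n, t ^ (n + 1) * f n) ^ j := by
  set F := ∑' n, t ^ (n + 1) * f n
  induction N with
  | zero => simp
  | succ N ih =>
    calc ∑ n ∈ Finset.range (N + 1), t ^ n * u n
        = ∑ n ∈ Finset.range N, ∑ k ∈ Finset.range (n + 1),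
            t ^ k * u k * (t ^ (n - k + 1) * f (n - k)) + 1 := by
          rw [Finset.sum_range_succ', pow_zero, h.zero, one_mul]
          simp_rw [h.pow_succ_mul_eq_sum]
      _ = ∑ k ∈ Finset.range N, t ^ k * u k *
            ∑ j ∈ Finset.range (N - k), t ^ (j + 1) * f j + 1 := by
          rw [Finset.sum_range_diag_flip N fun k j => t ^ k * u k * (t ^ (j + 1) * f j)]
          simp_rw [Finset.mul_sum]
      _ ≤ (∑ k ∈ Finset.range N, t ^ k * u k) * F + 1 := by
          rw [Finset.sum_mul]
          gcongr
          exact ENNReal.sum_le_tsum _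
      _ ≤ (∑ j ∈ Finset.range N, F ^ j) * F + 1 := by gcongr
      _ = ∑ j ∈ Finset.range (N + 1), F ^ j := by rw [geom_sum_succ, mul_comm]

lemma tsum_pow_mul_le (h : IsRenewalSeq u f) (t : ℝ≥0∞) :
    ∑' n, t ^ n * u n ≤ (1 - ∑' n, t ^ (n + 1) * f n)⁻¹ := by
  rw [ENNReal.tsum_eq_iSup_nat, ← ENNReal.tsum_geometric]
  exact iSup_le fun N => (h.sum_range_pow_mul_le_geom t N).trans (ENNReal.sum_le_tsum _)

end IsRenewalSeq

section MatPow

variable [DecidableEq S] {M M' : S → S → ℝ≥0∞} {x : S}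

@[simp] lemma matPow_zero (M : S → S → ℝ≥0∞) (y z : S) :
    matPow M 0 y z = if y = z then 1 else 0 := rfl

lemma matPow_succ (M : S → S → ℝ≥0∞) (n : ℕ) (y z : S) :
    matPow M (n + 1) y z = ∑' w, matPow M n y w * M w z := rfl

@[simp] lemma matPow_one (M : S → S → ℝ≥0∞) (y z : S) : matPow M 1 y z = M y z := by
  simp [matPow_succ, ite_mul]

lemma matPow_add (M : S → S → ℝ≥0∞) (a b : ℕ) (y z : S) :
    matPow M (a + b) y z = ∑' w, matPow M a y w * matPow M b w z := by
  induction b generalizing z with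
  | zero => simp [mul_ite]
  | succ b ih =>
    simp_rw [← add_assoc, matPow_succ, ih, ← ENNReal.tsum_mul_right, ← ENNReal.tsum_mul_left,
      mul_assoc]
    exact ENNReal.tsum_comm

lemma matPow_succ' (M : S → S → ℝ≥0∞) (n : ℕ) (y z : S) :
    matPow M (n + 1) y z = ∑' w, M y w * matPow M n w z := by
  rw [add_comm, matPow_add]
  simp_rw [matPow_one]

lemma matPow_mono (h : M ≤ M') (n : ℕ) : matPow M n ≤ matPow M' n := by
  induction n with
  | zero => exact le_rfl
  | succ n ih => exact fun y z => ENNReal.tsum_le_tsum fun w => mul_le_mul' (ih y w) (h w z)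

variable (M x) in
noncomputable def taboo : S → S → ℝ≥0∞ := fun z y => if y = x then 0 else M z y

lemma taboo_of_ne {y : S} (hy : y ≠ x) (z : S) : taboo M x z y = M z y := if_neg hy

lemma taboo_mono (h : M ≤ M') (x : S) : taboo M x ≤ taboo M' x := fun z y => by
  unfold taboo
  split_ifs
  exacts [le_rfl, h z y]

lemma matPow_taboo_succ_self (n : ℕ) (z : S) : matPow (taboo M x) (n + 1) z x = 0 := by
  simp [matPow_succ, taboo]

variable (M x) in
/-- The weight of the paths of length `n + 1` from `v` that visit `x` only at their end. -/
noncomputable def firstPassage (n : ℕ) (v : S) : ℝ≥0∞ :=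
  ∑' w, matPow (taboo M x) n v w * M w x

lemma firstPassage_mono (h : M ≤ M') (x : S) (n : ℕ) (v : S) :
    firstPassage M x n v ≤ firstPassage M' x n v :=
  ENNReal.tsum_le_tsum fun w => mul_le_mul' (matPow_mono (taboo_mono h x) n v w) (h w x)

lemma firstPassage_zero (v : S) : firstPassage M x 0 v = M v x := by
  simp [firstPassage, ite_mul]

lemma firstPassage_add (a b : ℕ) (v : S) :
    firstPassage M x (a + b) v = ∑' z, matPow (taboo M x) a v z * firstPassage M x b z := by
  simp_rw [firstPassage, matPow_add, ← ENNReal.tsum_mul_right, ← ENNReal.tsum_mul_left, mul_assoc]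
  exact ENNReal.tsum_comm

lemma firstPassage_succ (n : ℕ) (v : S) :
    firstPassage M x (n + 1) v = ∑' z, taboo M x v z * firstPassage M x n z := by
  rw [add_comm, firstPassage_add]
  simp_rw [matPow_one]

lemma matPow_eq_sum_mul_matPow_taboo (n : ℕ) (z : S) :
    matPow M n x z =
      ∑ k ∈ Finset.range (n + 1), matPow M k x x * matPow (taboo M x) (n - k) x z := by
  induction n generalizing z with
  | zero => simp
  | succ n ih =>
    rw [Finset.sum_range_succ, Nat.sub_self, matPow_zero]
    by_cases hz : z = x
    · subst hz
      rw [if_pos rfl, mul_one, Finset.sum_eq_zero fun k hk => ?_, zero_add]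
      rw [Nat.sub_add_comm (Finset.mem_range_succ_iff.1 hk), matPow_taboo_succ_self, mul_zero]
    · rw [if_neg (Ne.symm hz), mul_zero, add_zero, matPow_succ,
        tsum_congr fun w => by rw [← taboo_of_ne (M := M) hz w]]
      simp_rw [ih, Finset.sum_mul, mul_assoc]
      rw [Summable.tsum_finsetSum fun _ _ => ENNReal.summable]
      refine Finset.sum_congr rfl fun k hk => ?_
      rw [ENNReal.tsum_mul_left, Nat.sub_add_comm (Finset.mem_range_succ_iff.1 hk), matPow_succ]

lemma isRenewalSeq_matPow_firstPassage :
    IsRenewalSeq (fun n => matPow M n x x) (fun n => firstPassage M x n x) where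
  zero := by simp
  succ n := by
    rw [matPow_succ]
    simp_rw [matPow_eq_sum_mul_matPow_taboo n, Finset.sum_mul, mul_assoc]
    rw [Summable.tsum_finsetSum fun _ _ => ENNReal.summable]
    simp_rw [ENNReal.tsum_mul_left, firstPassage]

lemma exists_matPow_taboo_pos {n : ℕ} {u : S} (h : 0 < matPow M n x u) :
    ∃ p, 0 < matPow (taboo M x) p x u := by
  rw [matPow_eq_sum_mul_matPow_taboo, Finset.sum_pos_iff] at h
  obtain ⟨k, -, hk⟩ := h
  exact ⟨n - k, (CanonicallyOrderedAdd.mul_pos.1 hk).2⟩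

lemma exists_firstPassage_pos {n : ℕ} {v : S} (h : 0 < matPow M (n + 1) v x) :
    ∃ q, 0 < firstPassage M x q v := by
  induction n generalizing v with
  | zero => exact ⟨0, by simpa [firstPassage_zero] using h⟩
  | succ n ih =>
    rw [matPow_succ', pos_iff_ne_zero, Ne, ENNReal.tsum_eq_zero, not_forall] at h
    obtain ⟨z, hz⟩ := h
    obtain ⟨hvz, hzx⟩ := CanonicallyOrderedAdd.mul_pos.1 (pos_iff_ne_zero.2 hz)
    rcases eq_or_ne z x with rfl | hzx'
    · exact ⟨0, by rwa [firstPassage_zero]⟩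
    · obtain ⟨q, hq⟩ := ih hzx
      refine ⟨q + 1, lt_of_lt_of_le ?_ ((firstPassage_succ q v).symm ▸ ENNReal.le_tsum z)⟩
      rw [taboo_of_ne hzx']
      exact CanonicallyOrderedAdd.mul_pos.2 ⟨hvz, hq⟩

/-- An entry where `M < M'` lies on a first-return loop at `x`, which therefore weighs less
under `M`. -/
lemma exists_firstPassage_self_lt (hle : M ≤ M') (hne : M ≠ M')
    (hirr : ∀ y z : S, ∃ n, 1 ≤ n ∧ 0 < matPow M' n y z)
    (hfin : ∀ n, firstPassage M' x n x ≠ ⊤) :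
    ∃ n, firstPassage M x n x < firstPassage M' x n x := by
  obtain ⟨u, hu⟩ := (Pi.lt_def.1 (lt_of_le_of_ne hle hne)).2
  obtain ⟨v, huv⟩ := (Pi.lt_def.1 hu).2
  obtain ⟨m, -, hxu⟩ := hirr x u
  obtain ⟨p, hp⟩ := exists_matPow_taboo_pos hxu
  have hT := matPow_mono (taboo_mono hle x)
  rcases eq_or_ne v x with rfl | hvx
  · exact ⟨p, tsum_mul_lt_tsum_mul_of_lt_right (hT p v) (hle · v) (hfin p) hp.ne' huv⟩
  obtain ⟨k, hk, hvx'⟩ := hirr v x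
  obtain ⟨q, hq⟩ := exists_firstPassage_pos (n := k - 1) (by rwa [Nat.sub_add_cancel hk])
  refine ⟨p + 1 + q, ?_⟩
  have hfin' := hfin (p + 1 + q)
  simp only [firstPassage_add (p + 1) q] at hfin' ⊢
  have hxv : matPow (taboo M x) (p + 1) x v < matPow (taboo M' x) (p + 1) x v :=
    tsum_mul_lt_tsum_mul_of_lt_right (hT p x) (taboo_mono hle x · v)
      (ENNReal.lt_top_of_mul_ne_top_left (ENNReal.ne_top_of_tsum_ne_top hfin' v) hq.ne').ne
      hp.ne' (by rwa [taboo_of_ne hvx, taboo_of_ne hvx])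
  exact tsum_mul_lt_tsum_mul_of_lt_left (hT (p + 1) x) (firstPassage_mono hle x q) hfin' hxv hq.ne'

variable {ρ : ℝ≥0∞}

lemma matPow_self_ne_top (hρT : ρ ≠ ⊤)
    (hρ : Tendsto (fun n : ℕ => (matPow M n x x) ^ ((n : ℝ)⁻¹))
      (atTop ⊓ 𝓟 {n : ℕ | 0 < matPow M n x x}) (𝓝 ρ)) (n : ℕ) :
    matPow M n x x ≠ ⊤ := by
  rcases eq_or_ne n 0 with rfl | hn
  · simp
  refine ne_top_of_mul_le_add_of_eventually_ne_top (u := fun n => matPow M n x x)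
    (fun a b => (matPow_add M a b x x).symm ▸ ENNReal.le_tsum x) ?_ hn
  filter_upwards [eventually_le_pow_of_tendsto_rpow_inv hρ
    (ENNReal.lt_add_right hρT one_ne_zero)] with n hn
  exact ne_top_of_le_ne_top (ENNReal.pow_ne_top (ENNReal.add_ne_top.2 ⟨hρT, ENNReal.one_ne_top⟩)) hn

lemma tsum_firstPassage_self_le_one (hρT : ρ ≠ ⊤)
    (hρ : Tendsto (fun n : ℕ => (matPow M n x x) ^ ((n : ℝ)⁻¹))
      (atTop ⊓ 𝓟 {n : ℕ | 0 < matPow M n x x}) (𝓝 ρ)) :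
    ∑' n, ρ⁻¹ ^ (n + 1) * firstPassage M x n x ≤ 1 :=
  tsum_pow_succ_mul_le_of_forall_lt fun _ ht =>
    (isRenewalSeq_matPow_firstPassage.tsum_pow_succ_mul_lt_one
      (tsum_pow_mul_ne_top_of_tendsto_rpow_inv hρ (matPow_self_ne_top hρT hρ) ht)).le

end MatPow

theorem R_transient_of_eq_spectral_radius_general [DecidableEq S]
    (A B : S → S → ℝ≥0∞)
    (hBirr : ∀ x y : S, ∃ n, 1 ≤ n ∧ 0 < matPow B n x y)
    (hle : ∀ x y, A x y ≤ B x y) (hne : A ≠ B)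
    (ρA ρB : ℝ≥0∞) (hρBT : ρB ≠ ⊤)
    (hρB : ∀ x, Tendsto (fun n : ℕ => (matPow B n x x) ^ ((n : ℝ)⁻¹))
        (atTop ⊓ Filter.principal {n : ℕ | 0 < matPow B n x x}) (nhds ρB))
    (heq : ρB = ρA) :
    ∀ x : S, (∑' n : ℕ, ρA⁻¹ ^ (n + 1) * matPow A (n + 1) x x) ≠ ⊤ := by
  intro x
  subst heq
  have hr : ρB⁻¹ ≠ 0 := ENNReal.inv_ne_zero.2 hρBT
  have hFB := tsum_firstPassage_self_le_one hρBT (hρB x)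
  have hFB_fin := ne_top_of_le_ne_top ENNReal.one_ne_top hFB
  obtain ⟨n₀, hn₀⟩ := exists_firstPassage_self_lt hle hne hBirr
    (ne_top_of_tsum_pow_succ_mul_ne_top hr hFB_fin)
  have hFA : ∑' n, ρB⁻¹ ^ (n + 1) * firstPassage A x n x < 1 :=
    (tsum_mul_lt_tsum_mul_of_lt_right le_rfl (firstPassage_mono hle x · x) hFB_fin
      (pow_ne_zero (n₀ + 1) hr) hn₀).trans_le hFB
  refine ne_of_lt ?_
  calc ∑' n, ρB⁻¹ ^ (n + 1) * matPow A (n + 1) x x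
      ≤ ∑' n, ρB⁻¹ ^ n * matPow A n x x :=
        ENNReal.tsum_comp_le_tsum_of_injective (add_left_injective 1) _
    _ ≤ (1 - ∑' n, ρB⁻¹ ^ (n + 1) * firstPassage A x n x)⁻¹ :=
        isRenewalSeq_matPow_firstPassage.tsum_pow_mul_le _
    _ < ⊤ := ENNReal.inv_lt_top.2 (tsub_pos_of_lt hFA)

theorem R_transient_of_eq_spectral_radius [Countable S] [DecidableEq S]
    (A B : S → S → ℝ≥0∞) (hAfin : ∀ x y, A x y ≠ ⊤) (hBfin : ∀ x y, B x y ≠ ⊤)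
    (hAirr : ∀ x y : S, ∃ n, 1 ≤ n ∧ 0 < matPow A n x y)
    (hBirr : ∀ x y : S, ∃ n, 1 ≤ n ∧ 0 < matPow B n x y)
    (hle : ∀ x y, A x y ≤ B x y) (hne : A ≠ B)
    (ρA ρB : ℝ≥0∞) (hρA0 : 0 < ρA) (hρBT : ρB ≠ ⊤)
    (hρA : ∀ x, Tendsto (fun n : ℕ => (matPow A n x x) ^ ((n : ℝ)⁻¹))
        (atTop ⊓ Filter.principal {n : ℕ | 0 < matPow A n x x}) (nhds ρA))
    (hρB : ∀ x, Tendsto (fun n : ℕ => (matPow B n x x) ^ ((n : ℝ)⁻¹))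
        (atTop ⊓ Filter.principal {n : ℕ | 0 < matPow B n x x}) (nhds ρB))
    (heq : ρB = ρA) :
    ∀ x : S, (∑' n : ℕ, ρA⁻¹ ^ (n + 1) * matPow A (n + 1) x x) ≠ ⊤ :=
  R_transient_of_eq_spectral_radius_general A B hBirr hle hne ρA ρB hρBT hρB heq
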